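/- arXiv:1503.07155 — 2 statements merged into one kernel-verified Lean document; each statement's English description precedes it below -/
import Mathlib

section
/- Let M be a compact metric space, f: M → M a continuous map, μ a Borel probability measure on M, and z ∈ B(μ). Then the support of μ is contained in the ω-limit set of z: for every y ∈ supp(μ) there is a sequence n_k → ∞ with f^{n_k}(z) → y. -/
open MeasureTheory Filter Topology

def basin {M : Type*} [TopologicalSpace M] [MeasurableSpace M]
    (f : M → M) (μ : Measure M) : Set M :=
  {z | ∀ φ : C(M, ℝ),
    Tendsto (fun n : ℕ => (n : ℝ)⁻¹ * ∑ k ∈ Finset.range n, φ (f^[k] z))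
      atTop (𝓝 (∫ x, φ x ∂μ))}

/-- if z lies in the basin of μ, then every point of the support of μ
(characterized as the points all of whose open neighbourhoods have positive μ-measure)
is an ω-limit point of z. -/
theorem support_subset_omegaLimit {M : Type*} [MetricSpace M] [CompactSpace M]
    [MeasurableSpace M] [BorelSpace M] (f : M → M) (hf : Continuous f)
    (μ : Measure M) [IsProbabilityMeasure μ] (z : M) (hz : z ∈ basin f μ)
    (y : M) (hy : ∀ U : Set M, IsOpen U → y ∈ U → 0 < μ U) :
    ∃ n : ℕ → ℕ, StrictMono n ∧ Tendsto (fun j => f^[n j] z) atTop (𝓝 y) := by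
  have key : ∀ ε : ℝ, 0 < ε → ∃ᶠ n in atTop, dist (f^[n] z) y < ε := by
    intro ε hε
    by_contra hcon
    rw [not_frequently] at hcon
    set φ : C(M, ℝ) := ⟨fun x => max (ε - dist x y) 0,
      ((continuous_const.sub (continuous_id.dist continuous_const)).max continuous_const)⟩
      with hφdef
    have hφnn : (0 : M → ℝ) ≤ fun x => φ x := fun x => le_max_right _ _
    have hφint : Integrable (fun x => φ x) μ := φ.continuous.integrable_of_hasCompactSupport
      (HasCompactSupport.of_compactSpace _)
    have hball : Metric.ball y ε ⊆ Function.support fun x => φ x := by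
      intro x hx
      have : 0 < ε - dist x y := by
        simp only [Metric.mem_ball] at hx; linarith
      simp only [Function.mem_support, hφdef, ContinuousMap.coe_mk]
      positivity
    have hpos : 0 < ∫ x, φ x ∂μ := by
      rw [integral_pos_iff_support_of_nonneg hφnn hφint]
      exact lt_of_lt_of_le (hy _ Metric.isOpen_ball (Metric.mem_ball_self hε))
        (measure_mono hball)
    have hlim := hz φ
    -- eventually φ (f^[n] z) = 0
    obtain ⟨N, hN⟩ := eventually_atTop.1 hcon
    have hzero : ∀ n, N ≤ n → φ (f^[n] z) = 0 := by
      intro n hn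
      have := hN n hn
      simp only [hφdef, ContinuousMap.coe_mk]
      have : ε - dist (f^[n] z) y ≤ 0 := by
        push_neg at this; linarith [hN n hn]
      exact max_eq_right this
    have heq : (fun n : ℕ => (n : ℝ)⁻¹ * ∑ k ∈ Finset.range n, φ (f^[k] z)) =ᶠ[atTop]
        fun n : ℕ => (n : ℝ)⁻¹ * ∑ k ∈ Finset.range N, φ (f^[k] z) := by
      filter_upwards [eventually_ge_atTop N] with n hn
      congr 1
      refine (Finset.sum_subset (Finset.range_subset_range.2 hn) ?_).symm
      intro k _ hk
      exact hzero k (le_of_not_gt (fun h => hk (Finset.mem_range.2 h)))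
    have hlim0 : Tendsto (fun n : ℕ => (n : ℝ)⁻¹ * ∑ k ∈ Finset.range n, φ (f^[k] z))
        atTop (𝓝 0) := by
      rw [Filter.tendsto_congr' heq]
      simpa using tendsto_inv_atTop_nhds_zero_nat.mul_const
        (∑ k ∈ Finset.range N, φ (f^[k] z))
    exact absurd (tendsto_nhds_unique hlim hlim0) (ne_of_gt hpos)
  obtain ⟨n, hmono, hn⟩ := extraction_forall_of_frequently
    (fun j : ℕ => key (1 / (j + 1)) (by positivity))
  refine ⟨n, hmono, ?_⟩
  rw [tendsto_iff_dist_tendsto_zero]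
  refine squeeze_zero (fun j => dist_nonneg) (fun j => (hn j).le) ?_
  exact tendsto_one_div_add_atTop_nhds_zero_nat
end

section
/- Let M be a compact metric space, f: M → M a continuous map, μ a Borel probability measure on M, and x ∈ B(μ). If C ⊆ M is a closed set with μ(C) > 0, then liminf_{n→∞} dist(f^n(x), C) = 0; that is, there is a strictly increasing sequence n_k such that the distance from f^{n_k}(x) to C converges to 0. -/
open MeasureTheory Filter Topology

/-!
If the orbit of `x` eventually stayed at distance `≥ ε` from `C`, the bump function
`y ↦ max (ε - dist(y, C)) 0` would vanish along the orbit from some time on, so its Birkhoff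
averages would tend to `0`; but since `x` lies in the basin they tend to the integral of the bump,
which is positive because the bump is positive on `C` and `μ C > 0`.
-/

section

variable {M : Type*} [TopologicalSpace M] [MeasurableSpace M] {f : M → M} {μ : Measure M}

theorem frequently_pos_of_mem_basin {z : M} (hz : z ∈ basin f μ) {φ : C(M, ℝ)}
    (hφ : 0 < ∫ y, φ y ∂μ) : ∃ᶠ n in atTop, 0 < φ (f^[n] z) := by
  by_contra h
  obtain ⟨N, hN⟩ := eventually_atTop.1 (not_frequently.1 h)
  have hsum : ∀ n ≥ N,
      ∑ k ∈ Finset.range n, φ (f^[k] z) ≤ ∑ k ∈ Finset.range N, φ (f^[k] z) := by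
    intro n hn
    rw [← Finset.sum_range_add_sum_Ico _ hn, add_le_iff_nonpos_right]
    exact Finset.sum_nonpos fun k hk => not_lt.1 (hN k (Finset.mem_Ico.1 hk).1)
  have hlim : Tendsto (fun n : ℕ => (n : ℝ)⁻¹ * ∑ k ∈ Finset.range N, φ (f^[k] z))
      atTop (𝓝 0) := by
    simpa using tendsto_inv_atTop_nhds_zero_nat.mul_const (∑ k ∈ Finset.range N, φ (f^[k] z))
  have : ∫ y, φ y ∂μ ≤ 0 := le_of_tendsto_of_tendsto (hz φ) hlim <|
    eventually_atTop.2 ⟨N, fun n hn => mul_le_mul_of_nonneg_left (hsum n hn) (by positivity)⟩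
  linarith

end

theorem frequently_infDist_lt_of_mem_basin {M : Type*} [MetricSpace M] [CompactSpace M]
    [MeasurableSpace M] [BorelSpace M] {f : M → M} {μ : Measure M} [IsFiniteMeasure μ]
    {x : M} (hx : x ∈ basin f μ) {C : Set M} (hμC : 0 < μ C) {ε : ℝ} (hε : 0 < ε) :
    ∃ᶠ n in atTop, Metric.infDist (f^[n] x) C < ε := by
  let bump : C(M, ℝ) := ⟨fun y => max (ε - Metric.infDist y C) 0,
    (continuous_const.sub (Metric.continuous_infDist_pt C)).max continuous_const⟩
  have hC_support : C ⊆ Function.support bump := fun y hy => by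
    simpa [bump, Metric.infDist_zero_of_mem hy] using hε
  have hbump : 0 < ∫ y, bump y ∂μ :=
    (integral_pos_iff_support_of_nonneg (fun y => le_max_right _ _)
      (bump.continuous.integrable_of_hasCompactSupport (.of_compactSpace _))).2
      (hμC.trans_le (measure_mono hC_support))
  exact (frequently_pos_of_mem_basin hx hbump).mono fun n hn => by simpa [bump] using hn

theorem liminf_eq_zero_of_nonneg_of_mapClusterPt {β : Type*} {l : Filter β} {u : β → ℝ}
    (hu : 0 ≤ u) (h : MapClusterPt 0 l u) : l.liminf u = 0 := by
  have hfreq : ∃ᶠ b in l, u b ≤ 1 := h.frequently (Iic_mem_nhds one_pos)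
  exact le_antisymm (h.liminf_le ⟨0, eventually_map.2 (Eventually.of_forall hu)⟩)
    (le_liminf_of_le (.of_frequently_le hfreq) (Eventually.of_forall hu))

theorem liminf_dist_eq_zero_general {M : Type*} [MetricSpace M] [CompactSpace M]
    [MeasurableSpace M] [BorelSpace M] (f : M → M)
    (μ : Measure M) [IsProbabilityMeasure μ] (x : M) (hx : x ∈ basin f μ)
    (C : Set M) (hμC : 0 < μ C) :
    atTop.liminf (fun n : ℕ => Metric.infDist (f^[n] x) C) = 0 ∧
    ∃ n : ℕ → ℕ, StrictMono n ∧
      Tendsto (fun j => Metric.infDist (f^[n j] x) C) atTop (𝓝 0) := by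
  have hcluster : MapClusterPt 0 atTop fun n : ℕ => Metric.infDist (f^[n] x) C :=
    Metric.nhds_basis_ball.mapClusterPt_iff_frequently.2 fun ε hε =>
      (frequently_infDist_lt_of_mem_basin hx hμC hε).mono fun n hn => by
        simpa [abs_of_nonneg Metric.infDist_nonneg] using hn
  exact ⟨liminf_eq_zero_of_nonneg_of_mapClusterPt (fun n => Metric.infDist_nonneg) hcluster,
    hcluster.tendsto_subseq⟩

/-- a basin point accumulates on every closed set of positive measure. -/
theorem liminf_dist_eq_zero {M : Type*} [MetricSpace M] [CompactSpace M]
    [MeasurableSpace M] [BorelSpace M] (f : M → M) (hf : Continuous f)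
    (μ : Measure M) [IsProbabilityMeasure μ] (x : M) (hx : x ∈ basin f μ)
    (C : Set M) (hC : IsClosed C) (hμC : 0 < μ C) :
    atTop.liminf (fun n : ℕ => Metric.infDist (f^[n] x) C) = 0 ∧
    ∃ n : ℕ → ℕ, StrictMono n ∧
      Tendsto (fun j => Metric.infDist (f^[n j] x) C) atTop (𝓝 0) :=
  liminf_dist_eq_zero_general f μ x hx C hμC
end
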